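/- If a permutation σ avoids the pattern 1324 and contains the pattern 3416725, then σ has an occurrence of 3416725 at positions j₁ < j₂ < … < j₇ in which the entries at positions j₁ and j₃ (playing the roles of the '3' and the '1') are left-to-right minima of σ, and the entries at positions j₅ and j₇ (playing the roles of the '7' and the '5') are right-to-left maxima of σ. -/

import Mathlib

/-- `π` contains the pattern `σ`: there is a strictly increasing choice of positions
on which `π` is order-isomorphic to `σ`. -/
def Contains {n k : ℕ} (π : Equiv.Perm (Fin n)) (σ : Equiv.Perm (Fin k)) : Prop :=
  ∃ f : Fin k → Fin n, StrictMono f ∧ ∀ a b : Fin k, σ a < σ b ↔ π (f a) < π (f b)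

/-- `π` avoids the pattern `σ`. -/
def Avoids {n k : ℕ} (π : Equiv.Perm (Fin n)) (σ : Equiv.Perm (Fin k)) : Prop :=
  ¬ Contains π σ

/-- `σ` has a left-to-right minimum at position `i`. -/
def LRMin {n : ℕ} (σ : Equiv.Perm (Fin n)) (i : Fin n) : Prop :=
  ∀ j : Fin n, j < i → σ i < σ j

/-- `σ` has a right-to-left maximum at position `i`. -/
def RLMax {n : ℕ} (σ : Equiv.Perm (Fin n)) (i : Fin n) : Prop :=
  ∀ j : Fin n, i < j → σ j < σ i

noncomputable def p1324 : Equiv.Perm (Fin 4) := Equiv.ofBijective ![0, 2, 1, 3] (by decide)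
noncomputable def p3416725 : Equiv.Perm (Fin 7) := Equiv.ofBijective ![2, 3, 0, 5, 6, 1, 4] (by decide)

/-!
Replace the `3` and the `1` of an occurrence by the smallest entries weakly to their left, and
the `7` and the `5` by the largest entries weakly to their right; these are left-to-right minima
and right-to-left maxima. Avoiding 1324 keeps the pattern: every entry weakly left of the `4`
exceeds the `2` (otherwise it forms 1324 with the `4`, `2`, `5`), and every entry weakly right of
the `2` is below the `6` (otherwise the `1`, `6`, `2` and it form 1324). Hence the new `3` stays
above the `2`, the new `1` lies right of the `4`, the new `7` lies left of the `2`, and the new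
`5` stays below the `6`.
-/

section

variable {n : ℕ}

theorem contains_of_apply_eq_comp {k : ℕ} {π : Equiv.Perm (Fin n)} {τ : Equiv.Perm (Fin k)}
    {f g : Fin k → Fin n} (hf : StrictMono f) (hg : StrictMono g) (h : ∀ i, π (f i) = g (τ i)) :
    Contains π τ :=
  ⟨f, hf, fun a b => by rw [h, h, hg.lt_iff_lt]⟩

theorem contains_p1324_of_lt {σ : Equiv.Perm (Fin n)} {a b c d : Fin n}
    (hab : a < b) (hbc : b < c) (hcd : c < d)
    (hac : σ a < σ c) (hcb : σ c < σ b) (hbd : σ b < σ d) : Contains σ p1324 :=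
  contains_of_apply_eq_comp (f := ![a, b, c, d]) (g := ![σ a, σ c, σ b, σ d])
    (Fin.strictMono_iff_lt_succ.2 fun i => by fin_cases i <;> assumption)
    (Fin.strictMono_iff_lt_succ.2 fun i => by fin_cases i <;> assumption)
    (fun i => by fin_cases i <;> rfl)

theorem Contains.exists_chain_p3416725 {σ : Equiv.Perm (Fin n)} (h : Contains σ p3416725) :
    ∃ f : Fin 7 → Fin n, StrictMono f ∧
      σ (f 2) < σ (f 5) ∧ σ (f 5) < σ (f 0) ∧ σ (f 0) < σ (f 1) ∧
      σ (f 1) < σ (f 6) ∧ σ (f 6) < σ (f 3) ∧ σ (f 3) < σ (f 4) := by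
  obtain ⟨f, hf, hiff⟩ := h
  exact ⟨f, hf, (hiff 2 5).1 (by decide), (hiff 5 0).1 (by decide), (hiff 0 1).1 (by decide),
    (hiff 1 6).1 (by decide), (hiff 6 3).1 (by decide), (hiff 3 4).1 (by decide)⟩

theorem lt_apply_of_avoids_p1324 {σ : Equiv.Perm (Fin n)} (h : Avoids σ p1324)
    {x b c d : Fin n} (hxb : x < b) (hbc : b < c) (hcd : c < d)
    (hcb : σ c < σ b) (hbd : σ b < σ d) : σ c < σ x :=
  lt_of_not_ge fun hle => h <| contains_p1324_of_lt hxb hbc hcd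
    (hle.lt_of_ne (σ.injective.ne (hxb.trans hbc).ne)) hcb hbd

theorem apply_lt_of_avoids_p1324 {σ : Equiv.Perm (Fin n)} (h : Avoids σ p1324)
    {a b c y : Fin n} (hab : a < b) (hbc : b < c) (hcy : c < y)
    (hac : σ a < σ c) (hcb : σ c < σ b) : σ y < σ b :=
  lt_of_not_ge fun hle => h <| contains_p1324_of_lt hab hbc hcy hac hcb
    (hle.lt_of_ne (σ.injective.ne (hbc.trans hcy).ne))

theorem exists_lrMin_le (σ : Equiv.Perm (Fin n)) (m : Fin n) :
    ∃ i ≤ m, LRMin σ i ∧ σ i ≤ σ m := by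
  obtain ⟨i, hi, hmin⟩ := (Finset.Iic m).exists_min_image σ ⟨m, Finset.mem_Iic.2 le_rfl⟩
  rw [Finset.mem_Iic] at hi
  refine ⟨i, hi, fun j hj => ?_, hmin m (Finset.mem_Iic.2 le_rfl)⟩
  exact (hmin j (Finset.mem_Iic.2 (hj.le.trans hi))).lt_of_ne (σ.injective.ne hj.ne')

theorem exists_rlMax_ge (σ : Equiv.Perm (Fin n)) (m : Fin n) :
    ∃ i ≥ m, RLMax σ i ∧ σ m ≤ σ i := by
  obtain ⟨i, hi, hmax⟩ := (Finset.Ici m).exists_max_image σ ⟨m, Finset.mem_Ici.2 le_rfl⟩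
  rw [Finset.mem_Ici] at hi
  refine ⟨i, hi, fun j hj => ?_, hmax m (Finset.mem_Ici.2 le_rfl)⟩
  exact (hmax j (Finset.mem_Ici.2 (hi.trans hj.le))).lt_of_ne (σ.injective.ne hj.ne')

end

theorem occurrence_3416725_with_extreme_entries
    (n : ℕ) (σ : Equiv.Perm (Fin n))
    (havoid : Avoids σ p1324) (hcont : Contains σ p3416725) :
    ∃ j : Fin 7 → Fin n, StrictMono j ∧
      σ (j 2) < σ (j 5) ∧ σ (j 5) < σ (j 0) ∧ σ (j 0) < σ (j 1) ∧
      σ (j 1) < σ (j 6) ∧ σ (j 6) < σ (j 3) ∧ σ (j 3) < σ (j 4) ∧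
      LRMin σ (j 0) ∧ LRMin σ (j 2) ∧ RLMax σ (j 4) ∧ RLMax σ (j 6) := by
  obtain ⟨f, hf, h25, h50, h01, h16, h63, h34⟩ := hcont.exists_chain_p3416725
  have h51 : σ (f 5) < σ (f 1) := h50.trans h01
  have h53 : σ (f 5) < σ (f 3) := h51.trans (h16.trans h63)
  obtain ⟨a, ha, haMin, hav⟩ := exists_lrMin_le σ (f 0)
  obtain ⟨c, hc, hcMin, hcv⟩ := exists_lrMin_le σ (f 2)
  obtain ⟨e, he, heMax, hev⟩ := exists_rlMax_ge σ (f 4)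
  obtain ⟨g, hg, hgMax, hgv⟩ := exists_rlMax_ge σ (f 6)
  have ha1 : a < f 1 := ha.trans_lt (hf (by decide))
  have h1c : f 1 < c := by
    refine lt_of_not_ge fun hc1 => (hcv.trans_lt h25).not_gt ?_
    rcases hc1.lt_or_eq with hc1 | rfl
    · exact lt_apply_of_avoids_p1324 havoid hc1 (hf (by decide)) (hf (by decide)) h51 h16
    · exact h51
  have hc3 : c < f 3 := hc.trans_lt (hf (by decide))
  have h3e : f 3 < e := (hf (by decide)).trans_le he
  have he5 : e < f 5 := by
    refine lt_of_not_ge fun h5e => (h34.trans_le hev).not_gt ?_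
    rcases h5e.lt_or_eq with h5e | rfl
    · exact apply_lt_of_avoids_p1324 havoid (hf (by decide)) (hf (by decide)) h5e h25 h53
    · exact h53
  have h5g : f 5 < g := (hf (by decide)).trans_le hg
  refine ⟨![a, f 1, c, f 3, e, f 5, g],
    Fin.strictMono_iff_lt_succ.2 fun i => by fin_cases i <;> assumption,
    hcv.trans_lt h25,
    lt_apply_of_avoids_p1324 havoid ha1 (hf (by decide)) (hf (by decide)) h51 h16,
    hav.trans_lt h01, h16.trans_le hgv,
    apply_lt_of_avoids_p1324 havoid (hf (by decide)) (hf (by decide)) h5g h25 h53,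
    h34.trans_le hev, haMin, hcMin, heMax, hgMax⟩
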